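/- Stability lower-bounds the mass-times-separation of every optimal cluster: let k ≥ 2 with k ≤ |F| and β ≥ 0, and suppose the instance is β-stable, i.e., opt_{k−1} ≥ (1+β)·opt_k. Let T ⊆ F with |T| = k and cost(T) = opt_k, and let σ : D → T be an assignment for T. Then for every o ∈ T, |σ⁻¹(o)| · d(o, T − {o}) ≥ β·opt_k. -/
import Mathlib


open Finset

/-- `d(p,S)`: distance from `p` to the closest point of `S` (junk `0` if `S = ∅`). -/
noncomputable def dS {X : Type*} [MetricSpace X] (p : X) (S : Finset X) : ℝ :=
  if h : S.Nonempty then S.inf' h (fun c => dist p c) else 0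

/-- `cost(S) = Σ_{p∈D} d(p,S)`. -/
noncomputable def kmCost {X : Type*} [MetricSpace X] (D S : Finset X) : ℝ :=
  ∑ p ∈ D, dS p S

/-- `opt_k = min{cost(T) : T ⊆ F, |T| = k}`. -/
noncomputable def kmOpt {X : Type*} [MetricSpace X] (D F : Finset X) (k : ℕ) : ℝ :=
  sInf {c : ℝ | ∃ T : Finset X, T ⊆ F ∧ T.card = k ∧ kmCost D T = c}

lemma dS_nonneg {X : Type*} [MetricSpace X] (p : X) (S : Finset X) : 0 ≤ dS p S := by
  unfold dS
  split
  · exact Finset.le_inf' _ _ (fun c _ => dist_nonneg)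
  · exact le_refl 0

lemma dS_le_dist {X : Type*} [MetricSpace X] (p c : X) {S : Finset X} (hc : c ∈ S) :
    dS p S ≤ dist p c := by
  unfold dS
  rw [dif_pos ⟨c, hc⟩]
  exact Finset.inf'_le _ hc

lemma dS_triangle {X : Type*} [MetricSpace X] (p q : X) {S : Finset X} (hS : S.Nonempty) :
    dS p S ≤ dist p q + dS q S := by
  obtain ⟨c, hc, hcd⟩ := Finset.exists_mem_eq_inf' hS (fun c => dist q c)
  have : dS q S = dist q c := by unfold dS; rw [dif_pos hS]; exact hcd
  rw [this]
  calc dS p S ≤ dist p c := dS_le_dist p c hc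
    _ ≤ dist p q + dist q c := dist_triangle p q c

/-- Stability lower-bounds the mass-times-separation of every optimal cluster:
in a `β`-stable instance (`opt_{k−1} ≥ (1+β)·opt_k`), if `T ⊆ F` is an optimal solution
with `|T| = k` and `σ` is an assignment for `T`, then for every `o ∈ T`,
`|σ⁻¹(o)| · d(o, T − {o}) ≥ β·opt_k`. -/
theorem stability_cluster_separation {X : Type*} [MetricSpace X] [DecidableEq X]
    (D F : Finset X) (hD : D.Nonempty) (hF : F.Nonempty)
    (k : ℕ) (hk2 : 2 ≤ k) (hkF : k ≤ F.card)
    (β : ℝ) (hβ : 0 ≤ β)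
    (hstable : (1 + β) * kmOpt D F k ≤ kmOpt D F (k - 1))
    (T : Finset X) (hTF : T ⊆ F) (hTcard : T.card = k)
    (hTopt : kmCost D T = kmOpt D F k)
    (σ : X → X) (hσ : ∀ p ∈ D, σ p ∈ T ∧ dist p (σ p) = dS p T) :
    ∀ o ∈ T, β * kmOpt D F k ≤
      ((D.filter (fun p => σ p = o)).card : ℝ) * dS o (T.erase o) := by
  intro o ho
  set T' := T.erase o with hT'
  have hT'ne : T'.Nonempty := by
    rw [← Finset.card_pos, hT', Finset.card_erase_of_mem ho, hTcard]; omega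
  have hT'card : T'.card = k - 1 := by rw [hT', Finset.card_erase_of_mem ho, hTcard]
  have hT'F : T' ⊆ F := (Finset.erase_subset _ _).trans hTF
  have hopt : kmOpt D F (k - 1) ≤ kmCost D T' := by
    apply csInf_le
    · refine ⟨0, ?_⟩
      rintro c ⟨S, -, -, rfl⟩
      exact Finset.sum_nonneg fun p _ => dS_nonneg p S
    · exact ⟨T', hT'F, hT'card, rfl⟩
  have hbound : kmCost D T' ≤ kmCost D T +
      ((D.filter (fun p => σ p = o)).card : ℝ) * dS o T' := by
    have h1 : kmCost D T' ≤ ∑ p ∈ D, (dS p T + if σ p = o then dS o T' else 0) := by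
      apply Finset.sum_le_sum
      intro p hp
      obtain ⟨hσT, hσd⟩ := hσ p hp
      by_cases hpo : σ p = o
      · rw [if_pos hpo]
        calc dS p T' ≤ dist p o + dS o T' := dS_triangle p o hT'ne
          _ = dS p T + dS o T' := by rw [← hpo, hσd]
      · rw [if_neg hpo]
        have : σ p ∈ T' := Finset.mem_erase.2 ⟨hpo, hσT⟩
        calc dS p T' ≤ dist p (σ p) := dS_le_dist p (σ p) this
          _ = dS p T := hσd
          _ = dS p T + 0 := by ring
    have h2 : ∑ p ∈ D, (dS p T + if σ p = o then dS o T' else 0)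
        = kmCost D T + ((D.filter (fun p => σ p = o)).card : ℝ) * dS o T' := by
      rw [Finset.sum_add_distrib, ← Finset.sum_filter, Finset.sum_const, nsmul_eq_mul]
      rfl
    linarith [h1, h2.le]
  have := hstable
  rw [hTopt] at hbound
  linarith
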